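/- Successive differences of critical scaling dimensions: Let 2c be a positive integer and ω, α ∈ ℤ. Then Δ_{α+1}(c,ω) − Δ_α(c,ω) = [ (α − ω)/(2c) − 1/2 ], the integer nearest to (α − ω)/(2c) − 1/2 (half-integers rounded up). Consequently, as a function of α this difference is constant on consecutive blocks of length 2c and increases by exactly 1 between adjacent blocks. -/

import Mathlib

/-!
Write `n = 2c` and `t = α - ω`. The nearest integer to `x = (t - n/2)/n` is `q = ⌊t/n⌋`, and
`x² - (x - q)² = q(2x - q)` turns `Δ_α` into `n/8 + q t - n q (q + 1)/2`. So `Δ_α` is affine in `t`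
with slope `q` on each block `n q ≤ t < n (q + 1)`, and the affine pieces of adjacent blocks agree
at the block boundary `t = n (q + 1)`; hence `Δ_{α+1} - Δ_α = q`.
-/

/-- The critical scaling dimension `Δ_α(c,ω) = c(1/4 + x² − (x − [x])²)` with
`x = (α − ω − c)/(2c)`, where `c = c2/2` and `[x]` is the nearest integer to `x`
(half-integers rounded up, which is Mathlib's `round`). -/
noncomputable def scalingDim (c2 : ℕ) (ω α : ℤ) : ℝ :=
  ((c2 : ℝ) / 2) *
    (1 / 4 + (((α : ℝ) - (ω : ℝ) - (c2 : ℝ) / 2) / (c2 : ℝ)) ^ 2 -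
      ((((α : ℝ) - (ω : ℝ) - (c2 : ℝ) / 2) / (c2 : ℝ)) -
        (round (((α : ℝ) - (ω : ℝ) - (c2 : ℝ) / 2) / (c2 : ℝ)) : ℤ)) ^ 2)

lemma round_sub_half {α : Type*} [Field α] [LinearOrder α] [IsStrictOrderedRing α]
    [FloorRing α] (x : α) : round (x - 1 / 2) = ⌊x⌋ := by
  rw [round_eq, sub_add_cancel]

lemma Int.floor_intCast_div_natCast {α : Type*} [Field α] [LinearOrder α]
    [IsStrictOrderedRing α] [FloorRing α] (t : ℤ) (n : ℕ) : ⌊(t : α) / n⌋ = t / n := by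
  rw [Int.floor_div_natCast, Int.floor_intCast]

lemma Int.add_one_ediv_eq_or {t n : ℤ} (hn : 0 < n) :
    (t + 1) / n = t / n ∨ (t + 1) / n = t / n + 1 ∧ t + 1 = n * (t / n + 1) := by
  have hdiv := Int.mul_ediv_add_emod t n
  have hr := Int.emod_nonneg t hn.ne'
  rcases (show t % n + 1 ≤ n by linarith [Int.emod_lt_of_pos t hn]).lt_or_eq with hlt | heq
  · left
    exact ((Int.ediv_emod_unique hn).2 ⟨by linarith, by omega, hlt⟩).1
  · have hboundary : t + 1 = n * (t / n + 1) := by linarith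
    exact Or.inr ⟨by rw [hboundary, Int.mul_ediv_cancel_left _ hn.ne'], hboundary⟩

lemma scalingDim_eq {c2 : ℕ} (hc2 : 0 < c2) (ω α : ℤ) :
    scalingDim c2 ω α = (c2 : ℝ) / 8 + (((α - ω) / c2 : ℤ) : ℝ) * ((α - ω : ℤ) : ℝ) -
      c2 * (((α - ω) / c2 : ℤ) : ℝ) * ((((α - ω) / c2 : ℤ) : ℝ) + 1) / 2 := by
  have hc : (c2 : ℝ) ≠ 0 := by positivity
  have hround : round (((α : ℝ) - ω - c2 / 2) / c2) = (α - ω) / c2 := by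
    rw [show ((α : ℝ) - ω - c2 / 2) / c2 = ((α - ω : ℤ) : ℝ) / c2 - 1 / 2 by
        push_cast; field_simp,
      round_sub_half, Int.floor_intCast_div_natCast]
  rw [scalingDim, hround]
  push_cast
  field_simp
  ring

lemma scalingDim_succ_sub {c2 : ℕ} (hc2 : 0 < c2) (ω α : ℤ) :
    scalingDim c2 ω (α + 1) - scalingDim c2 ω α = (((α - ω) / c2 : ℤ) : ℝ) := by
  rw [scalingDim_eq hc2, scalingDim_eq hc2, show α + 1 - ω = α - ω + 1 by ring]
  rcases Int.add_one_ediv_eq_or (t := α - ω) (Int.natCast_pos.2 hc2) with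
    hsame | ⟨hnext, hboundary⟩
  · rw [hsame]
    push_cast
    ring
  · rw [hnext]
    have hboundary' : ((α - ω : ℤ) : ℝ) + 1 = c2 * ((((α - ω) / c2 : ℤ) : ℝ) + 1) := by
      exact_mod_cast hboundary
    push_cast at hboundary' ⊢
    linear_combination hboundary'

/-- Successive differences of critical scaling dimensions:
`Δ_{α+1}(c,ω) − Δ_α(c,ω) = [(α−ω)/(2c) − 1/2]` (nearest integer, halves rounded up);
consequently the difference is constant on consecutive blocks of length `2c` and
increases by exactly `1` between adjacent blocks. -/
theorem scaling_dimension_differences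
    (c2 : ℕ) (hc2 : 0 < c2) (ω : ℤ) :
    ∀ α : ℤ,
      scalingDim c2 ω (α + 1) - scalingDim c2 ω α =
        ((round (((α : ℝ) - (ω : ℝ)) / (c2 : ℝ) - 1 / 2) : ℤ) : ℝ) ∧
      (∀ α' : ℤ, ⌊((α : ℝ) - (ω : ℝ)) / (c2 : ℝ)⌋ = ⌊((α' : ℝ) - (ω : ℝ)) / (c2 : ℝ)⌋ →
        scalingDim c2 ω (α + 1) - scalingDim c2 ω α =
          scalingDim c2 ω (α' + 1) - scalingDim c2 ω α') ∧
      scalingDim c2 ω (α + (c2 : ℤ) + 1) - scalingDim c2 ω (α + (c2 : ℤ)) =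
        scalingDim c2 ω (α + 1) - scalingDim c2 ω α + 1 := by
  have hfloor (β : ℤ) : ⌊((β : ℝ) - ω) / c2⌋ = (β - ω) / c2 := by
    rw [← Int.cast_sub, Int.floor_intCast_div_natCast]
  intro α
  refine ⟨?_, fun α' hblock => ?_, ?_⟩
  · rw [scalingDim_succ_sub hc2, round_sub_half, hfloor]
  · rw [scalingDim_succ_sub hc2, scalingDim_succ_sub hc2, ← hfloor, ← hfloor, hblock]
  · rw [scalingDim_succ_sub hc2, scalingDim_succ_sub hc2,
      show α + c2 - ω = α - ω + 1 * c2 by ring, Int.add_mul_ediv_right _ _ (by omega)]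
    push_cast
    ring
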